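/- Let d = 3 and let c > 0. Suppose u : ℝ³ × ℝ → ℝ is twice continuously differentiable and satisfies the acoustic wave equation (1/c²) ∂ₜ² u(y, t) − Δ_y u(y, t) = 0 for all y ∈ ℝ³ and t > 0. Define v(x, t) = u(Φ(x), t) for x ∈ ℝ³ \ {0}, β(r) = ζ(r)²ζ'(r)/r², and the matrix field M by M(y)w = (ζ(|y|)²/(|y|² ζ'(|y|))) P_y(w) + ζ'(|y|)(w − P_y(w)). Then for every x ≠ 0 and t > 0, writing r = |x|, v satisfies the transformed wave equation (β(r)/c²) ∂ₜ² v(x, t) − div( y ↦ M(y) ∇_y v(y, t) )(x) = 0. -/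

import Mathlib

open scoped RealInnerProductSpace

noncomputable section
set_option maxHeartbeats 1000000

/-- The orthogonal projection of `w` onto the span of `e_r = x/‖x‖`. -/
def radialProj {E : Type*} [NormedAddCommGroup E] [InnerProductSpace ℝ E]
    (x w : E) : E :=
  ⟪w, ‖x‖⁻¹ • x⟫ • (‖x‖⁻¹ • x)

/-- The divergence of a vector field: the trace of its Jacobian. -/
def diverg {E : Type*} [NormedAddCommGroup E] [NormedSpace ℝ E]
    (u : E → E) (x : E) : ℝ :=
  LinearMap.trace ℝ E (fderiv ℝ u x)

/-- The Laplacian: the divergence of the gradient. -/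
def lap {E : Type*} [NormedAddCommGroup E] [InnerProductSpace ℝ E] [CompleteSpace E]
    (u : E → ℝ) (x : E) : ℝ :=
  diverg (gradient u) x

abbrev E3 := EuclideanSpace ℝ (Fin 3)

lemma trace_smulRight' (f : E3 →L[ℝ] ℝ) (b : E3) :
    LinearMap.trace ℝ E3 ((f.smulRight b : E3 →L[ℝ] E3) : E3 →ₗ[ℝ] E3) = f b := by
  have h : ((f.smulRight b : E3 →L[ℝ] E3) : E3 →ₗ[ℝ] E3)
      = dualTensorHom ℝ E3 E3 ((f : E3 →ₗ[ℝ] ℝ) ⊗ₜ b) := by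
    ext m; simp [dualTensorHom_apply]
  rw [h, LinearMap.trace_eq_contract_apply, contractLeft_apply]; rfl

lemma trace_id_E3 :
    LinearMap.trace ℝ E3 ((ContinuousLinearMap.id ℝ E3 : E3 →L[ℝ] E3) : E3 →ₗ[ℝ] E3) = 3 := by
  have h : ((ContinuousLinearMap.id ℝ E3) : E3 →ₗ[ℝ] E3) = LinearMap.id := rfl
  rw [h, LinearMap.trace_id]
  simp [finrank_euclideanSpace_fin]

lemma hasFDerivAt_norm' (x : E3) (hx : x ≠ 0) :
    HasFDerivAt (fun y : E3 => ‖y‖) (‖x‖⁻¹ • innerSL ℝ x) x := by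
  have h1 : HasFDerivAt (fun y : E3 => ‖y‖ ^ 2) (2 • innerSL ℝ x) x :=
    (hasStrictFDerivAt_norm_sq x).hasFDerivAt
  have h2 : HasDerivAt Real.sqrt (1 / (2 * Real.sqrt (‖x‖ ^ 2))) (‖x‖ ^ 2) :=
    Real.hasDerivAt_sqrt (pow_ne_zero 2 (norm_ne_zero_iff.mpr hx))
  have h3 := h2.comp_hasFDerivAt x h1
  have e1 : (fun y : E3 => Real.sqrt (‖y‖ ^ 2)) = fun y : E3 => ‖y‖ := by
    funext y; rw [Real.sqrt_sq (norm_nonneg y)]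
  have e2 : (1 / (2 * Real.sqrt (‖x‖ ^ 2))) • (2 • innerSL ℝ x) = ‖x‖⁻¹ • innerSL ℝ x := by
    ext w
    have hs : (0:ℝ) < ‖x‖ := norm_pos_iff.mpr hx
    simp only [ContinuousLinearMap.coe_smul', Pi.smul_apply, smul_eq_mul]
    rw [Real.sqrt_sq (norm_nonneg x)]
    field_simp
    ring
  rw [Function.comp_def, e1, e2] at h3
  exact h3

/-- d = 3: If `u` satisfies the acoustic wave equation
`(1/c²) ∂ₜ² u(y, t) − Δ_y u(y, t) = 0` for `t > 0`, then `v(x, t) = u(Φ(x), t)` satisfies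
the transformed wave equation
`(β(r)/c²) ∂ₜ² v(x, t) − div(y ↦ M(y) ∇_y v(y, t))(x) = 0` for `x ≠ 0`, `t > 0`. -/
theorem stmt10 (c : ℝ) (hc : 0 < c)
    (ζ : ℝ → ℝ) (hζ : ContDiff ℝ (⊤ : ℕ∞) ζ)
    (hζpos : ∀ r : ℝ, 0 < r → 0 < ζ r)
    (hζ'pos : ∀ r : ℝ, 0 < r → 0 < deriv ζ r)
    (Φ : EuclideanSpace ℝ (Fin 3) → EuclideanSpace ℝ (Fin 3))
    (hΦ : ∀ x, Φ x = (ζ ‖x‖ / ‖x‖) • x)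
    (u : EuclideanSpace ℝ (Fin 3) → ℝ → ℝ)
    (hu : ContDiff ℝ 2 (fun p : EuclideanSpace ℝ (Fin 3) × ℝ => u p.1 p.2))
    (hwave : ∀ (y : EuclideanSpace ℝ (Fin 3)) (t : ℝ), 0 < t →
      (1 / c ^ 2) * deriv (deriv (u y)) t - lap (fun z => u z t) y = 0)
    (v : EuclideanSpace ℝ (Fin 3) → ℝ → ℝ) (hv : ∀ x t, v x t = u (Φ x) t)
    (β : ℝ → ℝ) (hβ : ∀ r : ℝ, β r = ζ r ^ 2 * deriv ζ r / r ^ 2)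
    (M : EuclideanSpace ℝ (Fin 3) → EuclideanSpace ℝ (Fin 3) → EuclideanSpace ℝ (Fin 3))
    (hM : ∀ y w, M y w = (ζ ‖y‖ ^ 2 / (‖y‖ ^ 2 * deriv ζ ‖y‖)) • radialProj y w +
      deriv ζ ‖y‖ • (w - radialProj y w)) :
    ∀ (x : EuclideanSpace ℝ (Fin 3)), x ≠ 0 → ∀ t : ℝ, 0 < t →
      (β ‖x‖ / c ^ 2) * deriv (deriv (v x)) t -
        diverg (fun y => M y (gradient (fun z => v z t) y)) x = 0 := by
  intro x hx t ht
  have hs : (0:ℝ) < ‖x‖ := norm_pos_iff.mpr hx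
  set s : ℝ := ‖x‖ with hsdef
  have hs0 : s ≠ 0 := ne_of_gt hs
  -- derivatives of ζ
  have hζd : ∀ r : ℝ, HasDerivAt ζ (deriv ζ r) r := fun r =>
    ((hζ.differentiable (by simp)) r).hasDerivAt
  have hζC : ContDiff ℝ (⊤ : ℕ∞) (deriv ζ) := (contDiff_infty_iff_deriv.mp (hζ.of_le (by simp))).2
  have hζ'd : ∀ r : ℝ, HasDerivAt (deriv ζ) (deriv (deriv ζ) r) r := fun r =>
    ((hζC.differentiable (by simp)) r).hasDerivAt
  -- the spatial function and its gradient
  set ut : E3 → ℝ := fun y => u y t with hut_def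
  have hut : ContDiff ℝ 2 ut := hu.comp (contDiff_id.prodMk contDiff_const)
  set g : E3 → E3 := gradient ut with hg_def
  have hgC : ContDiff ℝ 1 g := by
    have h1 : ContDiff ℝ 1 (fderiv ℝ ut) := hut.fderiv_right (by norm_num)
    have h2 : g = fun y => (InnerProductSpace.toDual ℝ E3).symm (fderiv ℝ ut y) := rfl
    rw [h2]
    exact ((InnerProductSpace.toDual ℝ E3).symm.contDiff).comp h1
  have hgD : Differentiable ℝ g := hgC.differentiable one_ne_zero
  have hutD : Differentiable ℝ ut := hut.differentiable (by norm_num)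
  have hinner : ∀ (yy h : E3), (fderiv ℝ ut yy) h = ⟪g yy, h⟫ := by
    intro yy h
    have h2 : InnerProductSpace.toDual ℝ E3 (g yy) = fderiv ℝ ut yy :=
      (InnerProductSpace.toDual ℝ E3).apply_symm_apply _
    rw [← h2]; rfl
  -- derivative of Φ
  set D : E3 → (E3 →L[ℝ] E3) := fun y =>
    (ζ ‖y‖ / ‖y‖) • ContinuousLinearMap.id ℝ E3 +
      ((deriv ζ ‖y‖ * ‖y‖ - ζ ‖y‖) / ‖y‖ ^ 3) • ((innerSL ℝ y).smulRight y) with hD_def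
  have hΦd : ∀ y : E3, y ≠ 0 → HasFDerivAt Φ (D y) y := by
    intro y hy
    have hny : (0:ℝ) < ‖y‖ := norm_pos_iff.mpr hy
    have hc1 : HasDerivAt (fun r : ℝ => ζ r / r)
        ((deriv ζ ‖y‖ * ‖y‖ - ζ ‖y‖ * 1) / ‖y‖ ^ 2) ‖y‖ :=
      (hζd ‖y‖).div (hasDerivAt_id' ‖y‖) (ne_of_gt hny)
    have hn := hasFDerivAt_norm' y hy
    have hcomp := hc1.comp_hasFDerivAt y hn
    have hsm := hcomp.fun_smul (hasFDerivAt_id y)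
    have hfn : (fun y' : E3 => (ζ ‖y'‖ / ‖y'‖) • y') = Φ := funext fun y' => (hΦ y').symm
    simp only [Function.comp_def] at hcomp hsm
    rw [show (fun y' : E3 => (ζ ‖y'‖ / ‖y'‖) • id y') = Φ from hfn] at hsm
    refine hsm.congr_fderiv (Eq.symm ?_)
    ext1 h
    simp only [hD_def, ContinuousLinearMap.add_apply, ContinuousLinearMap.coe_smul',
      Pi.smul_apply, ContinuousLinearMap.coe_id', id_eq, ContinuousLinearMap.smulRight_apply,
      innerSL_apply_apply, ContinuousLinearMap.coe_comp', Function.comp_apply]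
    rw [smul_smul, smul_smul]
    congr 2
    rw [smul_eq_mul]
    field_simp
  -- Φ avoids the origin
  have hΦne : ∀ y : E3, y ≠ 0 → Φ y ≠ 0 := by
    intro y hy
    have hny : (0:ℝ) < ‖y‖ := norm_pos_iff.mpr hy
    rw [hΦ]
    exact smul_ne_zero (ne_of_gt (div_pos (hζpos _ hny) hny)) hy
  -- gradient of the transported function
  have hvt : (fun zz => v zz t) = fun zz => ut (Φ zz) := funext fun zz => hv zz t
  set W : E3 → E3 := fun y =>
    (ζ ‖y‖ / ‖y‖) • g (Φ y) +
      ((deriv ζ ‖y‖ * ‖y‖ - ζ ‖y‖) / ‖y‖ ^ 3 * ⟪g (Φ y), y⟫) • y with hW_def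
  have hgradv : ∀ y : E3, y ≠ 0 → gradient (fun zz => v zz t) y = W y := by
    intro y hy
    rw [hvt]
    have hco : HasFDerivAt (fun zz => ut (Φ zz)) ((fderiv ℝ ut (Φ y)).comp (D y)) y :=
      ((hutD (Φ y)).hasFDerivAt).comp y (hΦd y hy)
    have hga : HasGradientAt (fun zz => ut (Φ zz)) (W y) y := by
      rw [hasGradientAt_iff_hasFDerivAt]
      refine hco.congr_fderiv (Eq.symm ?_)
      ext h
      simp only [InnerProductSpace.toDual_apply_apply, ContinuousLinearMap.coe_comp',
        Function.comp_apply, hinner, hW_def, hD_def, ContinuousLinearMap.add_apply,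
        ContinuousLinearMap.coe_smul', Pi.smul_apply, ContinuousLinearMap.coe_id', id_eq,
        ContinuousLinearMap.smulRight_apply, innerSL_apply_apply, inner_add_left, inner_add_right,
        real_inner_smul_left, real_inner_smul_right]
      ring
    exact hga.gradient
  -- the explicit form of the transformed flux field
  set G : E3 → E3 := fun y =>
    (ζ ‖y‖ * deriv ζ ‖y‖ / ‖y‖) • g (Φ y) +
      ((ζ ‖y‖ ^ 2 - ‖y‖ * ζ ‖y‖ * deriv ζ ‖y‖) / ‖y‖ ^ 4 * ⟪g (Φ y), y⟫) • y with hG_def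
  have hFG : ∀ y : E3, y ≠ 0 → M y (gradient (fun zz => v zz t) y) = G y := by
    intro y hy
    have hny : (0:ℝ) < ‖y‖ := norm_pos_iff.mpr hy
    have hny0 : ‖y‖ ≠ 0 := ne_of_gt hny
    have hzy : deriv ζ ‖y‖ ≠ 0 := ne_of_gt (hζ'pos _ hny)
    rw [hgradv y hy, hM]
    have hrp : radialProj y (W y) = (deriv ζ ‖y‖ * ⟪g (Φ y), y⟫ / ‖y‖ ^ 2) • y := by
      simp only [radialProj, hW_def, real_inner_smul_right, inner_add_left,
        real_inner_smul_left, real_inner_self_eq_norm_sq]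
      rw [smul_smul]
      congr 1
      field_simp
      ring
    rw [hrp, hW_def, hG_def]
    match_scalars <;> (field_simp; try ring)
  -- eventual equality of the flux field
  have hev : (fun y => M y (gradient (fun zz => v zz t) y)) =ᶠ[nhds x] G := by
    filter_upwards [isOpen_compl_singleton.mem_nhds
      (by simpa using hx : x ∈ ({0} : Set E3)ᶜ)] with y hy
    exact hFG y (by simpa using hy)
  -- pointwise data at x
  have hΦx : Φ x ≠ 0 := hΦne x hx
  set g' : E3 →L[ℝ] E3 := fderiv ℝ g (Φ x) with hg'_def
  have hgΦ : HasFDerivAt (fun y => g (Φ y)) (g'.comp (D x)) x :=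
    ((hgD (Φ x)).hasFDerivAt).comp x (hΦd x hx)
  have hnx := hasFDerivAt_norm' x hx
  -- derivative of the two scalar coefficients
  have hA : HasDerivAt (fun r : ℝ => ζ r * deriv ζ r / r)
      (((deriv ζ s * deriv ζ s + ζ s * deriv (deriv ζ) s) * s - ζ s * deriv ζ s * 1) / s ^ 2) s :=
    ((hζd s).mul (hζ'd s)).div (hasDerivAt_id' s) hs0
  have hAx : HasFDerivAt (fun y : E3 => ζ ‖y‖ * deriv ζ ‖y‖ / ‖y‖)
      ((((deriv ζ s * deriv ζ s + ζ s * deriv (deriv ζ) s) * s - ζ s * deriv ζ s * 1) / s ^ 2) •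
        (s⁻¹ • innerSL ℝ x)) x := by
    have h0 := hA.comp_hasFDerivAt x hnx
    simpa [Function.comp_def] using h0
  have hnum : HasDerivAt (fun r : ℝ => ζ r ^ 2 - r * ζ r * deriv ζ r)
      (2 * ζ s * deriv ζ s -
        ((1 * ζ s + s * deriv ζ s) * deriv ζ s + s * ζ s * deriv (deriv ζ) s)) s := by
    have h1 : HasDerivAt (fun r : ℝ => ζ r ^ 2) (2 * ζ s * deriv ζ s) s := by
      simpa using (hζd s).fun_pow 2
    have h2 : HasDerivAt (fun r : ℝ => r * ζ r * deriv ζ r)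
        ((1 * ζ s + s * deriv ζ s) * deriv ζ s + s * ζ s * deriv (deriv ζ) s) s :=
      ((hasDerivAt_id' s).mul (hζd s)).mul (hζ'd s)
    exact h1.sub h2
  have hden : HasDerivAt (fun r : ℝ => r ^ 4) (4 * s ^ 3) s := by
    simpa using hasDerivAt_pow 4 s
  have hB : HasDerivAt (fun r : ℝ => (ζ r ^ 2 - r * ζ r * deriv ζ r) / r ^ 4)
      (((2 * ζ s * deriv ζ s -
          ((1 * ζ s + s * deriv ζ s) * deriv ζ s + s * ζ s * deriv (deriv ζ) s)) * s ^ 4 -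
        (ζ s ^ 2 - s * ζ s * deriv ζ s) * (4 * s ^ 3)) / (s ^ 4) ^ 2) s :=
    hnum.div hden (pow_ne_zero 4 hs0)
  have hBx : HasFDerivAt (fun y : E3 => (ζ ‖y‖ ^ 2 - ‖y‖ * ζ ‖y‖ * deriv ζ ‖y‖) / ‖y‖ ^ 4)
      ((((2 * ζ s * deriv ζ s -
          ((1 * ζ s + s * deriv ζ s) * deriv ζ s + s * ζ s * deriv (deriv ζ) s)) * s ^ 4 -
        (ζ s ^ 2 - s * ζ s * deriv ζ s) * (4 * s ^ 3)) / (s ^ 4) ^ 2) •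
        (s⁻¹ • innerSL ℝ x)) x := by
    have h0 := hB.comp_hasFDerivAt x hnx
    simpa [Function.comp_def] using h0
  -- derivative of the inner-product factor
  set Lin : E3 →L[ℝ] ℝ := (innerSL ℝ x).comp (g'.comp (D x)) + innerSL ℝ (g (Φ x)) with hLin_def
  have hip : HasFDerivAt (fun y : E3 => ⟪g (Φ y), y⟫) Lin x := by
    have h0 := hgΦ.inner ℝ (hasFDerivAt_id x)
    have heq : (fderivInnerCLM ℝ ((fun y => g (Φ y)) x, id x)).comp
        ((g'.comp (D x)).prod (ContinuousLinearMap.id ℝ E3)) = Lin := by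
      ext h
      simp only [hLin_def, fderivInnerCLM_apply, ContinuousLinearMap.coe_comp',
        Function.comp_apply, ContinuousLinearMap.add_apply, innerSL_apply_apply,
        ContinuousLinearMap.prod_apply, ContinuousLinearMap.coe_id', id_eq]
      rw [real_inner_comm x (g' ((D x) h))]
      exact add_comm _ _
    rw [heq] at h0
    exact h0
  have hσ := hBx.fun_mul hip
  have hG1 := hAx.fun_smul hgΦ
  have hG2 := hσ.fun_smul (hasFDerivAt_id x)
  have hGd := hG1.fun_add hG2
  beta_reduce at hGd
  simp only [id_eq] at hGd
  rw [← hG_def] at hGd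
  -- time derivative part
  have hvx : v x = u (Φ x) := funext fun tt => hv x tt
  have hdd : deriv (deriv (u (Φ x))) t = c ^ 2 * lap ut (Φ x) := by
    have hw := hwave (Φ x) t ht
    rw [← hut_def] at hw
    have hc2 : (c:ℝ) ^ 2 ≠ 0 := pow_ne_zero 2 (ne_of_gt hc)
    field_simp at hw
    linarith
  -- divergence as a trace
  have hdiv : diverg (fun y => M y (gradient (fun z => v z t) y)) x
      = LinearMap.trace ℝ E3 (fderiv ℝ G x) := by
    simp only [diverg]
    rw [hev.fderiv_eq]
  rw [hvx, hdd, hdiv, hGd.fderiv]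
  -- decompose the composed Jacobian
  have hcomp_decomp : g'.comp (D x) = (ζ ‖x‖ / ‖x‖) • g' +
      ((deriv ζ ‖x‖ * ‖x‖ - ζ ‖x‖) / ‖x‖ ^ 3) • ((innerSL ℝ x).smulRight (g' x)) := by
    ext h
    simp only [hD_def, ContinuousLinearMap.coe_comp', Function.comp_apply,
      ContinuousLinearMap.add_apply, ContinuousLinearMap.coe_smul', Pi.smul_apply,
      ContinuousLinearMap.coe_id', id_eq, ContinuousLinearMap.smulRight_apply, innerSL_apply_apply,
      map_add, map_smul]
  rw [hLin_def, hcomp_decomp]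
  have htg : LinearMap.trace ℝ E3 ((g' : E3 →L[ℝ] E3) : E3 →ₗ[ℝ] E3) = lap ut (Φ x) := rfl
  simp only [ContinuousLinearMap.coe_add, ContinuousLinearMap.coe_smul, map_add, map_smul,
    trace_smulRight', trace_id_E3, smul_eq_mul, ContinuousLinearMap.add_apply,
    ContinuousLinearMap.coe_smul', Pi.smul_apply, ContinuousLinearMap.coe_comp',
    Function.comp_apply, ContinuousLinearMap.coe_id', id_eq, innerSL_apply_apply,
    ContinuousLinearMap.smulRight_apply, inner_add_right, real_inner_smul_right,
    real_inner_self_eq_norm_sq, htg]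
  rw [real_inner_comm (g (Φ x)) x]
  rw [← hsdef, hβ]
  field_simp
  ring
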